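/- For all path lengths l_z ≥ l_y ≥ l_x ≥ 4, the theta graph H^{l_x,l_y,l_z}, consisting of two non-adjacent vertices a and b joined by three internally vertex-disjoint paths of edge-lengths l_x, l_y, l_z, does not belong to AND(1). -/

import Mathlib

/-- An `AND(1)`-realization of `G`: each vertex `v` gets a closed interval
`[L v, R v]` and a representative point `p v` in it, with adjacency of distinct
vertices iff mutual containment of the representative points. -/
def IsAND1Real {V : Type*} (G : SimpleGraph V) (L R p : V → ℝ) : Prop :=
  (∀ v, L v ≤ p v ∧ p v ≤ R v) ∧
    ∀ u v : V, u ≠ v →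
      (G.Adj u v ↔ L u ≤ p v ∧ p v ≤ R u ∧ L v ≤ p u ∧ p u ≤ R v)

/-- A central (`c`-)`AND(1)`-realization: moreover each representative point is
the midpoint of its interval. -/
def IsCAND1Real {V : Type*} (G : SimpleGraph V) (L R p : V → ℝ) : Prop :=
  IsAND1Real G L R p ∧ ∀ v, p v = (L v + R v) / 2

/-- The class `AND(1)`. -/
def InAND1 {V : Type*} (G : SimpleGraph V) : Prop :=
  ∃ L R p : V → ℝ, IsAND1Real G L R p

/-- The class `c-AND(1)`. -/
def InCAND1 {V : Type*} (G : SimpleGraph V) : Prop :=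
  ∃ L R p : V → ℝ, IsCAND1Real G L R p

/-- A linear ordering of the vertices (an injective map to `ℝ`) satisfying the
four point condition: `x < u < v < y` with `xv, uy ∈ E` implies `uv ∈ E`. -/
def FourPointCond {V : Type*} (G : SimpleGraph V) (f : V → ℝ) : Prop :=
  Function.Injective f ∧
    ∀ x u v y : V, f x < f u → f u < f v → f v < f y →
      G.Adj x v → G.Adj u y → G.Adj u v

/-- `G` is the theta graph `H^{lx, ly, lz}`: two distinct vertices `a = X 0`
and `b = X (last)` joined by three internally vertex-disjoint paths `X`, `Y`,
`Z` of edge-lengths `lx`, `ly`, `lz`, these being all the vertices and (the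
consecutive pairs along the paths) all the edges of `G`. -/
def IsThetaGraph {V : Type*} (G : SimpleGraph V) (lx ly lz : ℕ) : Prop :=
  ∃ (X : Fin (lx + 1) → V) (Y : Fin (ly + 1) → V) (Z : Fin (lz + 1) → V),
    Function.Injective X ∧ Function.Injective Y ∧ Function.Injective Z ∧
    X 0 = Y 0 ∧ Y 0 = Z 0 ∧
    X (Fin.last lx) = Y (Fin.last ly) ∧ Y (Fin.last ly) = Z (Fin.last lz) ∧
    (∀ i j, X i = Y j → (i = 0 ∧ j = 0) ∨ (i = Fin.last lx ∧ j = Fin.last ly)) ∧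
    (∀ i j, X i = Z j → (i = 0 ∧ j = 0) ∨ (i = Fin.last lx ∧ j = Fin.last lz)) ∧
    (∀ i j, Y i = Z j → (i = 0 ∧ j = 0) ∨ (i = Fin.last ly ∧ j = Fin.last lz)) ∧
    (∀ v : V, (∃ i, X i = v) ∨ (∃ i, Y i = v) ∨ (∃ i, Z i = v)) ∧
    (∀ u v : V, G.Adj u v ↔
      ((∃ i : Fin lx, (X i.castSucc = u ∧ X i.succ = v) ∨
          (X i.castSucc = v ∧ X i.succ = u)) ∨
       (∃ i : Fin ly, (Y i.castSucc = u ∧ Y i.succ = v) ∨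
          (Y i.castSucc = v ∧ Y i.succ = u)) ∨
       (∃ i : Fin lz, (Z i.castSucc = u ∧ Z i.succ = v) ∨
          (Z i.castSucc = v ∧ Z i.succ = u))))

/-!
A graph in `AND(1)` has a vertex order `f` with the four point condition: refine the preorder of
the representative points. In such an order, if a vertex adjacent to neither end of an edge `xy`
lies strictly between `x` and `y`, then so do all its neighbours, and hence everything reachable
from it while avoiding the neighbours of `x` and `y`. On an induced cycle of length at least `7`
this forces the minimum and the maximum of `f` to be adjacent, and `f` to increase, up to swaps of
consecutive vertices, along the rest of the cycle from the minimum to the maximum.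

In `H^{lx,ly,lz}` the global minimum and maximum lie on a common induced cycle, so they form an
edge of one of the three paths. The two cycles through that edge make `f` increase along both
other paths, starting from the same branch vertex. On the cycle formed by these two paths the
minimum is then within distance one of that branch vertex and the maximum within distance one of
the other; as all paths have length at least `4`, they are not adjacent.
-/

open SimpleGraph

theorem exists_injective_lt_imp_le {V : Type*} [Finite V] (p : V → ℝ) :
    ∃ f : V → ℝ, Function.Injective f ∧ ∀ u v, f u < f v → p u ≤ p v := by
  have := Fintype.ofFinite V
  obtain ⟨n, ⟨e⟩⟩ := Finite.exists_equiv_fin V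
  let key : V → ℝ ×ₗ ℕ := fun v => toLex (p v, (e v : ℕ))
  have hkey : Function.Injective key := fun u v h =>
    e.injective (Fin.ext (congrArg (fun x => (ofLex x).2) h))
  let _ : LinearOrder V := LinearOrder.lift' key hkey
  let iso := Fintype.orderIsoFinOfCardEq V rfl
  refine ⟨fun v => (iso.symm v : ℕ), Nat.cast_injective.comp (Fin.val_injective.comp
    iso.symm.injective), fun u v h => ?_⟩
  have huv : key u < key v := iso.symm.lt_iff_lt.1 (Fin.lt_def.2 (Nat.cast_lt.1 h))
  rcases Prod.Lex.lt_iff.1 huv with h | ⟨h, -⟩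
  exacts [h.le, h.le]

theorem InAND1.exists_fourPointCond {V : Type*} [Finite V] {G : SimpleGraph V} (h : InAND1 G) :
    ∃ f, FourPointCond G f := by
  obtain ⟨L, R, p, hp, hadj⟩ := h
  obtain ⟨f, hinj, hfp⟩ := exists_injective_lt_imp_le p
  refine ⟨f, hinj, fun x u v y hxu huv hvy hxv huy => ?_⟩
  obtain ⟨-, -, hvx, -⟩ := (hadj x v (ne_of_apply_ne f (hxu.trans huv).ne)).1 hxv
  obtain ⟨-, huy', -, -⟩ := (hadj u y (ne_of_apply_ne f (huv.trans hvy).ne)).1 huy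
  exact (hadj u v (ne_of_apply_ne f huv.ne)).2 ⟨(hp u).1.trans (hfp u v huv),
    (hfp v y hvy).trans huy', hvx.trans (hfp x u hxu), (hfp u v huv).trans (hp v).2⟩

theorem Nat.exists_lt_le_succ {α : Type*} [LinearOrder α] {g : ℕ → α} {c : α} {k : ℕ}
    (h0 : g 0 < c) (hk : c ≤ g k) : ∃ a < k, g a < c ∧ c ≤ g (a + 1) := by
  induction k with
  | zero => exact absurd hk h0.not_ge
  | succ k ih =>
    by_cases h : c ≤ g k
    · obtain ⟨a, ha, h⟩ := ih h
      exact ⟨a, by omega, h⟩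
    · exact ⟨k, k.lt_succ_self, not_le.1 h, hk⟩

namespace FourPointCond

variable {V : Type*} {G : SimpleGraph V} {f : V → ℝ}

theorem neg (hf : FourPointCond G f) : FourPointCond G (-f) := by
  refine ⟨neg_injective.comp hf.1, fun x u v y h1 h2 h3 hxv huy => ?_⟩
  simp only [Pi.neg_apply, neg_lt_neg_iff] at h1 h2 h3
  exact (hf.2 y v u x h3 h2 h1 huy.symm hxv.symm).symm

theorem mem_Ioo_of_adj (hf : FourPointCond G f) {x y u t : V} (hxy : G.Adj x y)
    (hu : f u ∈ Set.Ioo (f x) (f y)) (hxu : ¬ G.Adj x u) (hyu : ¬ G.Adj y u) (hut : G.Adj u t) :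
    f t ∈ Set.Ioo (f x) (f y) := by
  obtain ⟨hxu', huy'⟩ := hu
  constructor
  · by_contra! h
    rcases h.lt_or_eq with h | h
    · exact hxu (hf.2 t x u y h hxu' huy' hut.symm hxy)
    · exact hxu (hf.1 h ▸ hut.symm)
  · by_contra! h
    rcases h.lt_or_eq with h | h
    · exact hyu (hf.2 x u y t hxu' huy' h hxy hut).symm
    · exact hyu (hf.1 h ▸ hut.symm)

theorem mem_Ioo_of_walk (hf : FourPointCond G f) {x y : V} (hxy : G.Adj x y) {c : ℕ → V} {k : ℕ}
    (hc : ∀ l < k, G.Adj (c l) (c (l + 1)))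
    (hfar : ∀ l < k, ¬ G.Adj x (c l) ∧ ¬ G.Adj y (c l))
    (h0 : f (c 0) ∈ Set.Ioo (f x) (f y)) : f (c k) ∈ Set.Ioo (f x) (f y) := by
  induction k with
  | zero => exact h0
  | succ k ih =>
    exact hf.mem_Ioo_of_adj hxy (ih (fun l hl => hc l (by omega)) (fun l hl => hfar l (by omega)))
      (hfar k k.lt_succ_self).1 (hfar k k.lt_succ_self).2 (hc k k.lt_succ_self)

end FourPointCond

section Cycle

open Fin.NatCast Fin.CommRing

namespace SimpleGraph

theorem cycleGraph_adj_iff_val {n : ℕ} (hn : 2 ≤ n) {x y : Fin n} :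
    (cycleGraph n).Adj x y ↔
      x.val + 1 = y.val ∨ y.val + 1 = x.val ∨ x.val + 1 = y.val + n ∨ y.val + 1 = x.val + n := by
  rw [cycleGraph_adj']
  have hx := x.isLt
  have hy := y.isLt
  rcases lt_trichotomy x y with h | rfl | h
  · rw [Fin.coe_sub_iff_lt.2 h, Fin.coe_sub_iff_le.2 h.le]
    rw [Fin.lt_def] at h
    omega
  · have : (x - x).val = 0 := by simp [Fin.sub_def]
    rw [this]
    omega
  · rw [Fin.coe_sub_iff_lt.2 h, Fin.coe_sub_iff_le.2 h.le]
    rw [Fin.lt_def] at h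
    omega

theorem cycleGraph_natCast_adj_iff {n : ℕ} [NeZero n] (hn : 2 ≤ n) {p q : ℕ} (hpq : p ≤ q)
    (hq : q ≤ n) : (cycleGraph n).Adj (p : Fin n) (q : Fin n) ↔ q = p + 1 ∨ q + 1 = p + n := by
  rw [cycleGraph_adj_iff_val hn]
  rcases hq.lt_or_eq with hq | rfl
  · rw [Fin.val_cast_of_lt (hpq.trans_lt hq), Fin.val_cast_of_lt hq]
    omega
  · rw [Fin.natCast_self, Fin.val_zero _]
    rcases hpq.lt_or_eq with hp | rfl
    · rw [Fin.val_cast_of_lt hp]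
      omega
    · rw [Fin.natCast_self, Fin.val_zero _]
      omega

def cycleGraph.rotation {n : ℕ} [NeZero n] (i : Fin n) : cycleGraph n ≃g cycleGraph n where
  toEquiv := Equiv.addLeft i
  map_rel_iff' := by simp [cycleGraph_adj']

def cycleGraph.reflection {n : ℕ} [NeZero n] (i : Fin n) : cycleGraph n ≃g cycleGraph n where
  toEquiv := Equiv.subLeft i
  map_rel_iff' := by simp [cycleGraph_adj', or_comm]

end SimpleGraph

theorem Fin.natCast_ne_natCast {n : ℕ} [NeZero n] {p q : ℕ} (hpq : p < q) (hq : q ≤ n)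
    (hqp : q < p + n) : (p : Fin n) ≠ (q : Fin n) := by
  rw [Ne, Fin.ext_iff]
  rcases hq.lt_or_eq with hq | rfl
  · rw [Fin.val_cast_of_lt (hpq.trans hq), Fin.val_cast_of_lt hq]
    omega
  · rw [Fin.natCast_self, Fin.val_zero _, Fin.val_cast_of_lt hpq]
    omega

namespace FourPointCond

variable {V : Type*} {G : SimpleGraph V} {f : V → ℝ}

theorem eq_one_of_cycle_min_max {n : ℕ} [NeZero n] (hf : FourPointCond G f)
    (φ : cycleGraph n ↪g G) {K : ℕ} (hK : 0 < K) (hKn : K + 4 ≤ n)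
    (hmin : ∀ x, f (φ 0) ≤ f (φ x)) (hmax : ∀ x, f (φ x) ≤ f (φ K)) : K = 1 := by
  set c : ℕ → V := fun p => φ p
  have adj : ∀ {p q}, p ≤ q → q ≤ n → (G.Adj (c p) (c q) ↔ q = p + 1 ∨ q + 1 = p + n) :=
    fun h1 h2 => φ.map_adj_iff.trans (cycleGraph_natCast_adj_iff (by omega) h1 h2)
  have ne : ∀ {p q}, p < q → q ≤ n → q < p + n → f (c p) ≠ f (c q) :=
    fun h1 h2 h3 => hf.1.ne (φ.injective.ne (Fin.natCast_ne_natCast h1 h2 h3))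
  have c0 : c 0 = φ 0 := by simp [c]
  have cn : c n = c 0 := by simp [c]
  have hmin' : ∀ p, f (c 0) ≤ f (c p) := fun p => c0 ▸ hmin _
  by_contra hK1
  -- `c (n - 2)` is adjacent to no vertex of the arc `c 0, …, c K`; the edge of this arc that
  -- jumps over it traps both the walk `c (n - 2), c (n - 1), c 0` and the walk back to `c K`.
  have hw0 : f (c 0) < f (c (n - 2)) := (hmin' _).lt_of_ne (ne (by omega) (by omega) (by omega))
  have hwK : f (c (n - 2)) < f (c K) :=
    (hmax _).lt_of_ne (ne (by omega) (by omega) (by omega)).symm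
  obtain ⟨a, haK, ha, ha'⟩ := Nat.exists_lt_le_succ (g := f ∘ c) hw0 hwK.le
  have hw : f (c (n - 2)) ∈ Set.Ioo (f (c a)) (f (c (a + 1))) :=
    ⟨ha, ha'.lt_of_ne (ne (by omega) (by omega) (by omega)).symm⟩
  have hxy : G.Adj (c a) (c (a + 1)) := (adj (by omega) (by omega)).2 (Or.inl rfl)
  obtain rfl : a = 0 := by
    by_contra ha0
    have h := hf.mem_Ioo_of_walk hxy (c := fun l => c (n - 2 + l)) (k := 2)
      (fun l hl => (adj (by omega) (by omega)).2 (by omega))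
      (fun l hl => ⟨by rw [adj (by omega) (by omega)]; omega,
        by rw [adj (by omega) (by omega)]; omega⟩) hw
    rw [show n - 2 + 2 = n by omega, cn] at h
    exact h.1.not_ge (hmin' a)
  have h := hf.mem_Ioo_of_walk hxy (c := fun l => c (n - 2 - l)) (k := n - 2 - K)
    (fun l hl => ((adj (by omega) (by omega)).2 (Or.inl (by omega))).symm)
    (fun l hl => ⟨by rw [adj (by omega) (by omega)]; omega,
      by rw [adj (by omega) (by omega)]; omega⟩) hw
  rw [show n - 2 - (n - 2 - K) = K by omega] at h
  exact h.2.not_ge (hmax _)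

theorem adj_of_cycle_min_max {n : ℕ} (hn : 7 ≤ n) (hf : FourPointCond G f)
    (φ : cycleGraph n ↪g G) {i j : Fin n} (hmin : ∀ x, f (φ i) ≤ f (φ x))
    (hmax : ∀ x, f (φ x) ≤ f (φ j)) : G.Adj (φ i) (φ j) := by
  have : NeZero n := ⟨by omega⟩
  have hij : i ≠ j := by
    rintro rfl
    have h := φ.injective (hf.1 (le_antisymm (hmax (i + 1)) (hmin (i + 1))))
    rw [add_eq_left, Fin.ext_iff, Fin.val_one', Fin.val_zero, Nat.mod_eq_of_lt (by omega)] at h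
    exact one_ne_zero h
  have hsum : (i - j).val + (j - i).val = n := by
    rcases lt_or_gt_of_ne hij with h | h <;>
    · rw [Fin.coe_sub_iff_lt.2 h, Fin.coe_sub_iff_le.2 h.le]
      rw [Fin.lt_def] at h
      omega
  rw [φ.map_adj_iff, cycleGraph_adj']
  by_cases hK : (j - i).val + 4 ≤ n
  · refine .inr (hf.eq_one_of_cycle_min_max (φ.comp (cycleGraph.rotation i).toEmbedding)
      (by omega) hK ?_ ?_)
    · simpa [cycleGraph.rotation] using fun x => hmin _
    · simpa [cycleGraph.rotation] using fun x => hmax _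
  · refine .inl (hf.eq_one_of_cycle_min_max (φ.comp (cycleGraph.reflection i).toEmbedding)
      (by omega) (by omega) ?_ ?_)
    · simpa [cycleGraph.reflection] using fun x => hmin _
    · simpa [cycleGraph.reflection] using fun x => hmax _

theorem lt_of_cycle_min_max {n : ℕ} [NeZero n] (hf : FourPointCond G f) (φ : cycleGraph n ↪g G)
    {i : Fin n} (hmin : ∀ x, f (φ i) ≤ f (φ x)) (hmax : ∀ x, f (φ x) ≤ f (φ (i + 1)))
    {p q : ℕ} (hpq : p + 2 ≤ q) (hq : q < n) : f (φ (i - p)) < f (φ (i - q)) := by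
  set c : ℕ → V := fun p => φ (i - p)
  have adj : ∀ {p q}, p ≤ q → q ≤ n → (G.Adj (c p) (c q) ↔ q = p + 1 ∨ q + 1 = p + n) :=
    fun h1 h2 => (φ.comp (cycleGraph.reflection i).toEmbedding).map_adj_iff.trans
      (cycleGraph_natCast_adj_iff (by omega) h1 h2)
  have ne : ∀ {p q}, p < q → q ≤ n → q < p + n → f (c p) ≠ f (c q) := fun h1 h2 h3 =>
    hf.1.ne (φ.injective.ne (sub_right_injective.ne (Fin.natCast_ne_natCast h1 h2 h3)))
  have hmin' : ∀ p, f (c 0) ≤ f (c p) := fun p => by simpa [c] using hmin _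
  have hmax' : ∀ p, f (c p) ≤ f (c (n - 1)) := fun p => by
    simpa [c, Nat.cast_pred (show 0 < n by omega)] using hmax _
  change f (c p) < f (c q)
  by_contra! hqp
  replace hqp := hqp.lt_of_ne (ne (by omega) (by omega) (by omega)).symm
  have hqn : q < n - 1 := by
    by_contra
    exact hqp.not_ge (by rw [show q = n - 1 by omega]; exact hmax' p)
  -- An edge of the arc `c 0, …, c p` jumps over `c q` and traps the walk from `c q` to the
  -- maximum `c (n - 1)`.
  obtain ⟨a, hap, ha, ha'⟩ := Nat.exists_lt_le_succ (g := f ∘ c)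
    ((hmin' q).lt_of_ne (ne (by omega) (by omega) (by omega))) hqp.le
  have hxy : G.Adj (c a) (c (a + 1)) := (adj (by omega) (by omega)).2 (Or.inl rfl)
  have h := hf.mem_Ioo_of_walk hxy (c := fun l => c (q + l)) (k := n - 1 - q)
    (fun l hl => (adj (by omega) (by omega)).2 (by omega))
    (fun l hl => ⟨by rw [adj (by omega) (by omega)]; omega,
      by rw [adj (by omega) (by omega)]; omega⟩)
    ⟨ha, ha'.lt_of_ne (ne (by omega) (by omega) (by omega)).symm⟩
  rw [show q + (n - 1 - q) = n - 1 by omega] at h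
  exact h.2.not_ge (hmax' _)

end FourPointCond

end Cycle

theorem Fin.clamp_val {m : ℕ} (i : Fin (m + 1)) : Fin.clamp i m = i := by
  ext
  simp [Fin.coe_clamp]
  omega

theorem Fin.clamp_val_eq_castSucc {m : ℕ} (i : Fin m) : Fin.clamp i m = i.castSucc := by
  ext
  simp [Fin.coe_clamp]

theorem Fin.clamp_val_add_one {m : ℕ} (i : Fin m) : Fin.clamp (i + 1) m = i.succ := by
  ext
  simp [Fin.coe_clamp]

theorem Fin.clamp_zero (m : ℕ) : Fin.clamp 0 m = 0 := by
  ext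
  simp [Fin.coe_clamp]

theorem Fin.val_clamp_of_le {i m : ℕ} (hi : i ≤ m) : (Fin.clamp i m).val = i := by
  simp [Fin.coe_clamp, hi]

theorem Fin.clamp_inj {i j m : ℕ} (hi : i ≤ m) (hj : j ≤ m) :
    Fin.clamp i m = Fin.clamp j m ↔ i = j := by
  rw [Fin.ext_iff, Fin.val_clamp_of_le hi, Fin.val_clamp_of_le hj]

theorem Fin.clamp_cases {i j m m' : ℕ} (hi : i ≤ m) (hj : j ≤ m')
    (h : (Fin.clamp i m = 0 ∧ Fin.clamp j m' = 0) ∨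
      (Fin.clamp i m = Fin.last m ∧ Fin.clamp j m' = Fin.last m')) :
    (i = 0 ∧ j = 0) ∨ (i = m ∧ j = m') := by
  simpa only [Fin.ext_iff, Fin.val_clamp_of_le hi, Fin.val_clamp_of_le hj, Fin.val_zero,
    Fin.val_last] using h

/-- The three paths of a theta graph, indexed by `ℕ`; `path k i` only matters for `i ≤ len k`. -/
structure ThetaPaths {V : Type*} (G : SimpleGraph V) where
  path : Fin 3 → ℕ → V
  len : Fin 3 → ℕ
  two_le_len : ∀ k, 2 ≤ len k
  path_zero : ∀ k k', path k 0 = path k' 0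
  path_len : ∀ k k', path k (len k) = path k' (len k')
  eq_cases : ∀ {k k' i j}, i ≤ len k → j ≤ len k' → path k i = path k' j →
    (k = k' ∧ i = j) ∨ (i = 0 ∧ j = 0) ∨ (i = len k ∧ j = len k')
  adj_iff : ∀ u v, G.Adj u v ↔ ∃ k, ∃ i < len k,
    (path k i = u ∧ path k (i + 1) = v) ∨ (path k i = v ∧ path k (i + 1) = u)
  exists_eq : ∀ v, ∃ k, ∃ i ≤ len k, path k i = v

theorem IsThetaGraph.exists_thetaPaths {V : Type*} {G : SimpleGraph V} {lx ly lz : ℕ}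
    (h : IsThetaGraph G lx ly lz) (hx : 2 ≤ lx) (hy : 2 ≤ ly) (hz : 2 ≤ lz) :
    ∃ t : ThetaPaths G, t.len = ![lx, ly, lz] := by
  obtain ⟨X, Y, Z, hX, hY, hZ, hXY0, hYZ0, hXYl, hYZl, hXY, hXZ, hYZ, hcov, hadj⟩ := h
  refine ⟨{
    path := ![fun i => X (Fin.clamp i lx), fun i => Y (Fin.clamp i ly), fun i => Z (Fin.clamp i lz)]
    len := ![lx, ly, lz]
    two_le_len := fun k => by fin_cases k <;> simpa
    path_zero := fun k k' => by
      fin_cases k <;> fin_cases k' <;> simp [Fin.clamp_zero, hXY0, hYZ0]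
    path_len := fun k k' => by
      fin_cases k <;> fin_cases k' <;> simp [Fin.clamp_eq_last, hXYl, hYZl]
    eq_cases := fun {k k' i j} hi hj h => by
      fin_cases k <;> fin_cases k' <;> simp at hi hj h ⊢
      all_goals first
      | exact .inl ((Fin.clamp_inj hi hj).1 (hX h)) | exact .inl ((Fin.clamp_inj hi hj).1 (hY h))
      | exact .inl ((Fin.clamp_inj hi hj).1 (hZ h))
      | exact Fin.clamp_cases hi hj (hXY _ _ h) | exact Fin.clamp_cases hi hj (hXZ _ _ h)
      | exact Fin.clamp_cases hi hj (hYZ _ _ h)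
      | exact (Fin.clamp_cases hj hi (hXY _ _ h.symm)).imp And.symm And.symm
      | exact (Fin.clamp_cases hj hi (hXZ _ _ h.symm)).imp And.symm And.symm
      | exact (Fin.clamp_cases hj hi (hYZ _ _ h.symm)).imp And.symm And.symm
    adj_iff := fun u v => by
      rw [hadj]
      constructor
      · rintro (⟨i, h⟩ | ⟨i, h⟩ | ⟨i, h⟩)
        · exact ⟨0, i, i.isLt, by simpa [Fin.clamp_val_eq_castSucc, Fin.clamp_val_add_one] using h⟩
        · exact ⟨1, i, i.isLt, by simpa [Fin.clamp_val_eq_castSucc, Fin.clamp_val_add_one] using h⟩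
        · exact ⟨2, i, i.isLt, by simpa [Fin.clamp_val_eq_castSucc, Fin.clamp_val_add_one] using h⟩
      · rintro ⟨k, i, hi, h⟩
        fin_cases k
        · exact .inl ⟨⟨i, hi⟩, by
            simpa [← Fin.clamp_val_eq_castSucc, ← Fin.clamp_val_add_one] using h⟩
        · exact .inr (.inl ⟨⟨i, hi⟩, by
            simpa [← Fin.clamp_val_eq_castSucc, ← Fin.clamp_val_add_one] using h⟩)
        · exact .inr (.inr ⟨⟨i, hi⟩, by
            simpa [← Fin.clamp_val_eq_castSucc, ← Fin.clamp_val_add_one] using h⟩)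
    exists_eq := fun v => by
      rcases hcov v with ⟨i, rfl⟩ | ⟨i, rfl⟩ | ⟨i, rfl⟩
      · exact ⟨0, i, by simpa using i.is_le, by simp [Fin.clamp_val]⟩
      · exact ⟨1, i, by simpa using i.is_le, by simp [Fin.clamp_val]⟩
      · exact ⟨2, i, by simpa using i.is_le, by simp [Fin.clamp_val]⟩ }, rfl⟩

namespace ThetaPaths

variable {V : Type*} {G : SimpleGraph V} (t : ThetaPaths G)

theorem path_eq_path_iff {k k' : Fin 3} {i j : ℕ} (hi : i ≤ t.len k) (hj : j ≤ t.len k') :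
    t.path k i = t.path k' j ↔
      (k = k' ∧ i = j) ∨ (i = 0 ∧ j = 0) ∨ (i = t.len k ∧ j = t.len k') := by
  refine ⟨t.eq_cases hi hj, ?_⟩
  rintro (⟨rfl, rfl⟩ | ⟨rfl, rfl⟩ | ⟨rfl, rfl⟩)
  exacts [rfl, t.path_zero k k', t.path_len k k']

theorem adj_path_iff {k k' : Fin 3} {i j : ℕ} (hi : i ≤ t.len k) (hj : j ≤ t.len k') :
    G.Adj (t.path k i) (t.path k' j) ↔ (k = k' ∧ (i + 1 = j ∨ j + 1 = i)) ∨ (i = 0 ∧ j = 1) ∨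
      (i = 1 ∧ j = 0) ∨ (i = t.len k ∧ j + 1 = t.len k') ∨ (i + 1 = t.len k ∧ j = t.len k') := by
  rw [t.adj_iff]
  constructor
  · rintro ⟨k'', r, hr, ⟨h1, h2⟩ | ⟨h1, h2⟩⟩
    all_goals
      have := t.two_le_len k''
      rcases t.eq_cases (by omega) (by omega) h1 with ⟨rfl, rfl⟩ | h1 | h1 <;>
      rcases t.eq_cases (by omega) (by omega) h2 with ⟨rfl, rfl⟩ | h2 | h2 <;>
      first | (left; exact ⟨rfl, by omega⟩) | (right; omega)
  · rintro (⟨rfl, rfl | rfl⟩ | ⟨rfl, rfl⟩ | ⟨rfl, rfl⟩ | ⟨rfl, h⟩ | ⟨h, rfl⟩)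
    · exact ⟨k, i, by omega, .inl ⟨rfl, rfl⟩⟩
    · exact ⟨k, j, by omega, .inr ⟨rfl, rfl⟩⟩
    · exact ⟨k', 0, by have := t.two_le_len k'; omega, .inl ⟨t.path_zero k' k, rfl⟩⟩
    · exact ⟨k, 0, by have := t.two_le_len k; omega, .inr ⟨t.path_zero k k', rfl⟩⟩
    · exact ⟨k', j, by omega, .inr ⟨rfl, h ▸ t.path_len k' k⟩⟩
    · exact ⟨k, i, by omega, .inl ⟨rfl, h ▸ t.path_len k k'⟩⟩

theorem finite (t : ThetaPaths G) : Finite V :=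
  Finite.of_surjective (fun x : Σ k, Fin (t.len k + 1) => t.path x.1 x.2) fun v => by
    obtain ⟨k, i, hi, rfl⟩ := t.exists_eq v
    exact ⟨⟨k, i, by omega⟩, rfl⟩

def RisesAlong (f : V → ℝ) (k : Fin 3) : Prop :=
  ∀ i j, i + 2 ≤ j → j ≤ t.len k → f (t.path k i) < f (t.path k j)

section Cycle

open Fin.NatCast Fin.CommRing

def cycle (k k' : Fin 3) (x : Fin (t.len k + t.len k')) : V :=
  if x.val ≤ t.len k then t.path k x else t.path k' (t.len k + t.len k' - x)

variable {t} {k k' : Fin 3}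

theorem cycle_adj_iff (hkk' : k ≠ k') {x y : Fin (t.len k + t.len k')} :
    G.Adj (t.cycle k k' x) (t.cycle k k' y) ↔ (cycleGraph _).Adj x y := by
  have := t.two_le_len k
  have := t.two_le_len k'
  have hx := x.isLt
  have hy := y.isLt
  rw [cycleGraph_adj_iff_val (by omega), cycle, cycle]
  split_ifs <;> rw [t.adj_path_iff (by omega) (by omega)] <;>
    simp only [hkk', hkk'.symm, true_and, false_and, false_or] <;> omega

theorem cycle_injective (hkk' : k ≠ k') : Function.Injective (t.cycle k k') := by
  intro x y h
  have hx := x.isLt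
  have hy := y.isLt
  rw [cycle, cycle] at h
  ext
  split_ifs at h <;> rw [t.path_eq_path_iff (by omega) (by omega)] at h <;>
    simp only [hkk', hkk'.symm, true_and, false_and, false_or] at h <;> omega

def cycleEmb (hkk' : k ≠ k') : cycleGraph (t.len k + t.len k') ↪g G :=
  ⟨⟨t.cycle k k', cycle_injective hkk'⟩, cycle_adj_iff hkk'⟩

instance (t : ThetaPaths G) (k k' : Fin 3) : NeZero (t.len k + t.len k') :=
  ⟨by have := t.two_le_len k; omega⟩

theorem cycleEmb_apply (hkk' : k ≠ k') (x : Fin (t.len k + t.len k')) :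
    t.cycleEmb hkk' x = t.cycle k k' x :=
  rfl

theorem cycleEmb_natCast (hkk' : k ≠ k') {i : ℕ} (hi : i ≤ t.len k) :
    t.cycleEmb hkk' i = t.path k i := by
  have := t.two_le_len k'
  have hi' : (i : Fin (t.len k + t.len k')).val = i := Fin.val_cast_of_lt (by omega)
  simp [cycleEmb_apply, cycle, hi', hi]

theorem cycleEmb_neg_natCast (hkk' : k ≠ k') {j : ℕ} (hj : j ≤ t.len k') :
    t.cycleEmb hkk' (-(j : Fin _)) = t.path k' j := by
  rcases j.eq_zero_or_pos with rfl | hj0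
  · simpa using (cycleEmb_natCast hkk' (Nat.zero_le _)).trans (t.path_zero k k')
  have := t.two_le_len k
  have hj' : (-(j : Fin (t.len k + t.len k'))).val = t.len k + t.len k' - j := by
    rw [Fin.val_neg', Fin.val_cast_of_lt (by omega), Nat.mod_eq_of_lt (by omega)]
  rw [cycleEmb_apply, cycle, hj']
  split_ifs
  · rw [show j = t.len k' by omega, show t.len k + t.len k' - t.len k' = t.len k by omega]
    exact t.path_len k k'
  · congr
    omega

theorem exists_cycleEmb_eq_path (hkk' : k ≠ k') (x : Fin (t.len k + t.len k')) :
    ∃ p i, (p = k ∨ p = k') ∧ i ≤ t.len p ∧ t.cycleEmb hkk' x = t.path p i := by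
  rw [cycleEmb_apply, cycle]
  split_ifs with h
  · exact ⟨k, x, .inl rfl, h, rfl⟩
  · exact ⟨k', _, .inr rfl, by omega, rfl⟩

theorem exists_cycleEmb_eq (t : ThetaPaths G) (u v : V) :
    ∃ (k k' : Fin 3) (hkk' : k ≠ k') (x y : Fin (t.len k + t.len k')),
      t.cycleEmb hkk' x = u ∧ t.cycleEmb hkk' y = v := by
  obtain ⟨k, i, hi, rfl⟩ := t.exists_eq u
  obtain ⟨k', j, hj, rfl⟩ := t.exists_eq v
  by_cases hkk' : k = k'
  · subst hkk'
    have hk : k ≠ k + 1 := (by decide : ∀ k : Fin 3, k ≠ k + 1) k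
    exact ⟨k, k + 1, hk, i, j, cycleEmb_natCast hk hi, cycleEmb_natCast hk hj⟩
  · exact ⟨k, k', hkk', i, -j, cycleEmb_natCast hkk' hi, cycleEmb_neg_natCast hkk' hj⟩

variable {f : V → ℝ}

theorem risesAlong_of_adj_min_max (hf : FourPointCond G f) {r : ℕ} (hr : r < t.len k)
    (hmin : ∀ v, f (t.path k r) ≤ f v) (hmax : ∀ v, f v ≤ f (t.path k (r + 1))) {s : Fin 3}
    (hks : k ≠ s) : t.RisesAlong f s := by
  intro i j hij hj
  have h := hf.lt_of_cycle_min_max (t.cycleEmb hks) (i := (r : Fin _)) (p := r + i) (q := r + j)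
    (fun x => by rw [cycleEmb_natCast hks hr.le]; exact hmin _)
    (fun x => by rw [← Nat.cast_succ, cycleEmb_natCast hks hr]; exact hmax _) (by omega) (by omega)
  have e : ∀ l : ℕ, (r : Fin (t.len k + t.len s)) - ((r + l : ℕ) : Fin _) = -(l : Fin _) :=
    fun l => by push_cast; ring
  rwa [e, e, cycleEmb_neg_natCast hks (by omega), cycleEmb_neg_natCast hks hj] at h

theorem not_risesAlong_of_risesAlong (h4 : ∀ k, 4 ≤ t.len k) (hf : FourPointCond G f)
    (hkk' : k ≠ k') (hk : t.RisesAlong f k) : ¬ t.RisesAlong f k' := by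
  intro hk'
  have hrises : ∀ p, p = k ∨ p = k' → t.RisesAlong f p := by rintro p (rfl | rfl) <;> assumption
  obtain ⟨x, hx⟩ := Finite.exists_min (f ∘ t.cycleEmb hkk')
  obtain ⟨y, hy⟩ := Finite.exists_max (f ∘ t.cycleEmb hkk')
  have hadj := hf.adj_of_cycle_min_max (by have := h4 k; have := h4 k'; omega) _ hx hy
  obtain ⟨p, i, hp, hi, hxi⟩ := exists_cycleEmb_eq_path hkk' x
  obtain ⟨q, j, hq, hj, hyj⟩ := exists_cycleEmb_eq_path hkk' y
  have hi1 : i ≤ 1 := by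
    by_contra
    have h0 : t.cycleEmb hkk' 0 = t.path p 0 := by
      simpa using (cycleEmb_natCast hkk' (Nat.zero_le _)).trans (t.path_zero k p)
    have := hx 0
    rw [Function.comp_apply, Function.comp_apply, hxi, h0] at this
    exact this.not_gt (hrises p hp 0 i (by omega) hi)
  have hj1 : t.len q ≤ j + 1 := by
    by_contra
    have hl : t.cycleEmb hkk' (t.len k) = t.path q (t.len q) :=
      (cycleEmb_natCast hkk' le_rfl).trans (t.path_len k q)
    have := hy (t.len k : Fin _)
    rw [Function.comp_apply, Function.comp_apply, hyj, hl] at this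
    exact this.not_gt (hrises q hq j (t.len q) (by omega) le_rfl)
  rw [hxi, hyj, t.adj_path_iff hi hj] at hadj
  have := h4 p
  have := h4 q
  rcases hadj with ⟨-, h⟩ | h | h | h | h <;> omega

end Cycle

variable {t} {f : V → ℝ}

theorem false_of_adj_min_max (h4 : ∀ k, 4 ≤ t.len k) (hf : FourPointCond G f) {k : Fin 3} {r : ℕ}
    (hr : r < t.len k) (hmin : ∀ v, f (t.path k r) ≤ f v)
    (hmax : ∀ v, f v ≤ f (t.path k (r + 1))) : False := by
  obtain ⟨s, s', hss', hs, hs'⟩ :=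
    (by decide : ∀ k : Fin 3, ∃ s s' : Fin 3, s ≠ s' ∧ k ≠ s ∧ k ≠ s') k
  exact not_risesAlong_of_risesAlong h4 hf hss' (risesAlong_of_adj_min_max hf hr hmin hmax hs)
    (risesAlong_of_adj_min_max hf hr hmin hmax hs')

theorem not_fourPointCond (h4 : ∀ k, 4 ≤ t.len k) : ¬ FourPointCond G f := by
  intro hf
  have := t.finite
  have : Nonempty V := ⟨t.path 0 0⟩
  obtain ⟨m, hm⟩ := Finite.exists_min f
  obtain ⟨M, hM⟩ := Finite.exists_max f
  have hmM : G.Adj m M := by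
    obtain ⟨k, k', hkk', x, y, rfl, rfl⟩ := t.exists_cycleEmb_eq m M
    exact hf.adj_of_cycle_min_max (by have := h4 k; have := h4 k'; omega) _ (fun _ => hm _)
      (fun _ => hM _)
  obtain ⟨k, r, hr, ⟨rfl, rfl⟩ | ⟨rfl, rfl⟩⟩ := (t.adj_iff m M).1 hmM
  · exact false_of_adj_min_max h4 hf hr hm hM
  · exact false_of_adj_min_max h4 hf.neg hr (fun v => neg_le_neg (hM v))
      (fun v => neg_le_neg (hm v))

end ThetaPaths

/-- For all path lengths `4 ≤ lx ≤ ly ≤ lz`, the theta graph `H^{lx, ly, lz}`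
does not belong to `AND(1)`. -/
theorem theta_not_mem_and1 {V : Type*} (G : SimpleGraph V) (lx ly lz : ℕ)
    (hx : 4 ≤ lx) (hxy : lx ≤ ly) (hyz : ly ≤ lz)
    (h : IsThetaGraph G lx ly lz) : ¬ InAND1 G := by
  obtain ⟨t, ht⟩ := h.exists_thetaPaths (by omega) (by omega) (by omega)
  have := t.finite
  intro hG
  obtain ⟨f, hf⟩ := hG.exists_fourPointCond
  exact t.not_fourPointCond (fun k => by fin_cases k <;> simp [ht] <;> omega) hf
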